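/- If f is a K-linear bijection of the space of 3×3 trace-zero matrices over K satisfying f(x∗y) = f(x)∗f(y) for all trace-zero x, y, then tr((f(x))²) = tr(x²) for every trace-zero x. (Every automorphism of the pseudo-octonion algebra preserves the norm q(x) = (1/6)tr(x²).) -/

import Mathlib

/-!
For trace-zero `x`, one has `x ∗ x = x² − (tr(x²)/3)·I`, and the Cayley–Hamilton identity
`x³ = (tr(x²)/2)·x + (tr(x³)/3)·I` then gives `x ∗ (x ∗ x) = (tr(x²)/6)·x`, whatever `μ` is.
An automorphism `f` carries this identity for `x` to the one for `f x`, so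
`(tr(x²)/6)·f(x) = (tr(f(x)²)/6)·f(x)`, and `f(x) ≠ 0` for `x ≠ 0`.
-/

/-- The product of the pseudo-octonion algebra on `3 × 3` matrices:
`x ∗ y = μ·xy + (1−μ)·yx − (1/3)·tr(xy)·I₃`. -/
noncomputable def pstar (K : Type*) [Field K] (μ : K)
    (x y : Matrix (Fin 3) (Fin 3) K) : Matrix (Fin 3) (Fin 3) K :=
  μ • (x * y) + (1 - μ) • (y * x) - ((x * y).trace / 3) • (1 : Matrix (Fin 3) (Fin 3) K)

/-- The space of `3 × 3` trace-zero matrices over `K`. -/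
noncomputable def sl3 (K : Type*) [Field K] : Submodule K (Matrix (Fin 3) (Fin 3) K) :=
  LinearMap.ker (Matrix.traceLinearMap (Fin 3) K K)

open Matrix

section

variable {K : Type*} [Field K]

theorem trace_pstar [CharZero K] (μ : K) (x y : Matrix (Fin 3) (Fin 3) K) :
    (pstar K μ x y).trace = 0 := by
  simp only [pstar, trace_sub, trace_add, trace_smul, trace_one, Fintype.card_fin,
    trace_mul_comm y x, smul_eq_mul]
  field_simp
  ring

theorem pstar_mem_sl3 [CharZero K] (μ : K) (x y : Matrix (Fin 3) (Fin 3) K) :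
    pstar K μ x y ∈ sl3 K :=
  trace_pstar μ x y

theorem pstar_self (μ : K) (x : Matrix (Fin 3) (Fin 3) K) :
    pstar K μ x x = x * x - ((x * x).trace / 3) • 1 := by
  rw [pstar, ← add_smul, add_sub_cancel, one_smul]

theorem cube_eq_of_trace_eq_zero [CharZero K]
    {x : Matrix (Fin 3) (Fin 3) K} (hx : x.trace = 0) :
    x * x * x = ((x * x).trace / 2) • x + ((x * x * x).trace / 3) • 1 := by
  have h22 : x 2 2 = -(x 0 0 + x 1 1) := by
    simp only [trace, diag, Fin.sum_univ_three] at hx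
    linear_combination hx
  ext i j
  fin_cases i <;> fin_cases j <;>
    simp [mul_apply, trace, Fin.sum_univ_three, one_apply, h22] <;>
    ring

theorem pstar_self_pstar_self [CharZero K] (μ : K)
    {x : Matrix (Fin 3) (Fin 3) K} (hx : x.trace = 0) :
    pstar K μ x (pstar K μ x x) = ((x * x).trace / 6) • x := by
  set c := (x * x).trace / 3
  have hleft : x * (x * x - c • 1) = x * x * x - c • x := by
    rw [Matrix.mul_sub, Matrix.mul_smul, Matrix.mul_one, ← Matrix.mul_assoc]
  have hright : (x * x - c • 1) * x = x * x * x - c • x := by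
    rw [Matrix.sub_mul, Matrix.smul_mul, Matrix.one_mul]
  have htrace : (x * x * x - c • x).trace = (x * x * x).trace := by
    rw [trace_sub, trace_smul, hx, smul_zero, sub_zero]
  rw [pstar_self, pstar, hleft, hright, htrace, ← add_smul, add_sub_cancel, one_smul]
  nth_rw 1 [cube_eq_of_trace_eq_zero hx]
  have h6 : (x * x).trace / 2 - c = (x * x).trace / 6 := by
    field_simp
    ring
  rw [← h6]
  module

end

theorem pseudoOctonion_aut_preserves_norm_general
    (K : Type*) [Field K] [CharZero K] (ω : K)
    (f : sl3 K ≃ₗ[K] sl3 K)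
    (hf : ∀ x y z : sl3 K,
      (z : Matrix (Fin 3) (Fin 3) K) = pstar K ((1 - ω) / 3) x y →
      (f z : Matrix (Fin 3) (Fin 3) K) = pstar K ((1 - ω) / 3) (f x) (f y)) :
    ∀ x : sl3 K,
      ((f x : Matrix (Fin 3) (Fin 3) K) * (f x : Matrix (Fin 3) (Fin 3) K)).trace
        = ((x : Matrix (Fin 3) (Fin 3) K) * (x : Matrix (Fin 3) (Fin 3) K)).trace := by
  intro x
  set μ : K := (1 - ω) / 3
  obtain rfl | hx := eq_or_ne x 0
  · simp
  have hfx : (f x : Matrix (Fin 3) (Fin 3) K) ≠ 0 := by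
    simpa using (map_ne_zero_iff f f.injective).mpr hx
  let z : sl3 K := ⟨pstar K μ x x, pstar_mem_sl3 μ _ _⟩
  let w : sl3 K := ⟨pstar K μ x z, pstar_mem_sl3 μ _ _⟩
  have hw : w = (((x : Matrix (Fin 3) (Fin 3) K) * x).trace / 6) • x :=
    Subtype.ext (pstar_self_pstar_self μ x.2)
  have hsmul : (((x : Matrix (Fin 3) (Fin 3) K) * x).trace / 6) • (f x : Matrix (Fin 3) (Fin 3) K)
      = (((f x : Matrix (Fin 3) (Fin 3) K) * f x).trace / 6) • (f x : Matrix (Fin 3) (Fin 3) K) :=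
    calc _ = (f w : Matrix (Fin 3) (Fin 3) K) := by rw [hw, map_smul, Submodule.coe_smul]
      _ = pstar K μ (f x) (pstar K μ (f x) (f x)) := by rw [hf x z w rfl, hf x x z rfl]
      _ = _ := pstar_self_pstar_self μ (f x).2
  have htrace := smul_left_injective K hfx hsmul
  field_simp at htrace
  exact htrace.symm

/-- Every (linear, bijective) automorphism of the pseudo-octonion algebra preserves the
norm `q(x) = (1/6)·tr(x²)`, i.e. preserves `tr(x²)`. -/
theorem pseudoOctonion_aut_preserves_norm
    (K : Type*) [Field K] [CharZero K] (ω : K) (hω1 : ω ≠ 1) (hω3 : ω ^ 3 = 1)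
    (f : sl3 K ≃ₗ[K] sl3 K)
    (hf : ∀ x y z : sl3 K,
      (z : Matrix (Fin 3) (Fin 3) K) = pstar K ((1 - ω) / 3) x y →
      (f z : Matrix (Fin 3) (Fin 3) K) = pstar K ((1 - ω) / 3) (f x) (f y)) :
    ∀ x : sl3 K,
      ((f x : Matrix (Fin 3) (Fin 3) K) * (f x : Matrix (Fin 3) (Fin 3) K)).trace
        = ((x : Matrix (Fin 3) (Fin 3) K) * (x : Matrix (Fin 3) (Fin 3) K)).trace :=
  pseudoOctonion_aut_preserves_norm_general K ω f hf
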